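/- Let r ≥ 1 and let P be a polynomial in r variables with rational coefficients. Define F ∈ ℚ[[q]] to be the formal power series whose coefficient of q^m is the (finite) sum of P(λ_1, …, λ_r) over all weakly decreasing tuples of natural numbers λ_1 ≥ ⋯ ≥ λ_r ≥ 0 with λ_1 + ⋯ + λ_r = m. Then F is rational: there exist polynomials A, B ∈ ℚ[q] with B(0) ≠ 0 such that B · F = A in ℚ[[q]]. -/

import Mathlib

/-!
Write an antitone `λ : Fin r → ℕ` as the suffix sums `λ i = ∑_{j ≥ i} d j` of an arbitrary
`d : Fin r → ℕ`. Then `∑ λ i = ∑ (j + 1) d j`, and `P(λ)` becomes a polynomial `Q(d)`, so the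
series is a combination of the series `∑_d ∏ d_j ^ e_j q ^ (∑ (j + 1) d_j) = ∏_j S_{e_j}(q ^ (j + 1))`
with `S_e = ∑ n ^ e q ^ n`. Now `S_0 = 1 / (1 - q)`, `S_{e+1} = q S_e'`, and rational series are
closed under sums, products, derivatives and the substitution `q ↦ q ^ w`.
-/

open Finset
open scoped Polynomial PowerSeries

namespace PowerSeries

section Rational

variable {R : Type*} [CommRing R]

def IsRational (F : R⟦X⟧) : Prop :=
  ∃ A B : R[X], B.coeff 0 ≠ 0 ∧ (B : R⟦X⟧) * F = A

theorem isRational_coe [Nontrivial R] (A : R[X]) : IsRational (A : R⟦X⟧) :=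
  ⟨A, 1, by simp, by simp⟩

theorem isRational_C [Nontrivial R] (c : R) : IsRational (C c) := by
  simpa using isRational_coe (Polynomial.C c)

namespace IsRational

variable {F G : R⟦X⟧}

theorem expand (p : ℕ) (hp : p ≠ 0) (hF : IsRational F) : IsRational (expand p hp F) := by
  obtain ⟨A, B, hB, hBA⟩ := hF
  have hcoe (P : R[X]) :
      PowerSeries.expand p hp (P : R⟦X⟧) = (Polynomial.expand R p P : R⟦X⟧) := by
    ext n
    rw [coeff_expand, Polynomial.coeff_coe, Polynomial.coeff_coe,
      Polynomial.coeff_expand (Nat.pos_of_ne_zero hp)]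
  refine ⟨Polynomial.expand R p A, Polynomial.expand R p B, ?_, ?_⟩
  · simpa [Polynomial.coeff_expand (Nat.pos_of_ne_zero hp)] using hB
  · rw [← hcoe, ← hcoe, ← map_mul, hBA]

variable [IsDomain R]

theorem add (hF : IsRational F) (hG : IsRational G) : IsRational (F + G) := by
  obtain ⟨A, B, hB, hBA⟩ := hF
  obtain ⟨C, D, hD, hDC⟩ := hG
  refine ⟨D * A + B * C, B * D, by simp [Polynomial.mul_coeff_zero, hB, hD], ?_⟩
  push_cast
  rw [← hBA, ← hDC]
  ring

theorem mul (hF : IsRational F) (hG : IsRational G) : IsRational (F * G) := by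
  obtain ⟨A, B, hB, hBA⟩ := hF
  obtain ⟨C, D, hD, hDC⟩ := hG
  refine ⟨A * C, B * D, by simp [Polynomial.mul_coeff_zero, hB, hD], ?_⟩
  push_cast
  rw [← hBA, ← hDC]
  ring

theorem sum {ι : Type*} (s : Finset ι) {F : ι → R⟦X⟧} (hF : ∀ i ∈ s, IsRational (F i)) :
    IsRational (∑ i ∈ s, F i) := by
  classical
  induction s using Finset.induction_on with
  | empty => simpa using isRational_coe 0
  | insert i s hi ih =>
    rw [sum_insert hi]
    exact (hF i (mem_insert_self i s)).add (ih fun j hj => hF j (mem_insert_of_mem hj))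

theorem prod {ι : Type*} (s : Finset ι) {F : ι → R⟦X⟧} (hF : ∀ i ∈ s, IsRational (F i)) :
    IsRational (∏ i ∈ s, F i) := by
  classical
  induction s using Finset.induction_on with
  | empty => simpa using isRational_coe 1
  | insert i s hi ih =>
    rw [prod_insert hi]
    exact (hF i (mem_insert_self i s)).mul (ih fun j hj => hF j (mem_insert_of_mem hj))

/-- Differentiating `B * F = A` gives `B ^ 2 * F' = B * A' - B' * A`. -/
theorem derivative (hF : IsRational F) : IsRational (d⁄dX R F) := by
  obtain ⟨A, B, hB, hBA⟩ := hF
  refine ⟨B * Polynomial.derivative A - Polynomial.derivative B * A, B ^ 2,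
    by simpa [sq, Polynomial.mul_coeff_zero] using hB, ?_⟩
  have h := congrArg (d⁄dX R) hBA
  rw [Derivation.leibniz, derivative_coe, derivative_coe, smul_eq_mul, smul_eq_mul] at h
  push_cast
  rw [← hBA, ← h]
  ring

end IsRational

end Rational

theorem coeff_X_mul_derivative {R : Type*} [CommSemiring R] (F : R⟦X⟧) (n : ℕ) :
    coeff n (X * d⁄dX R F) = n * coeff n F := by
  cases n with
  | zero => simp
  | succ n => rw [coeff_succ_X_mul, coeff_derivative]; push_cast; ring

theorem isRational_mk_natCast_pow {R : Type*} [CommRing R] [IsDomain R] (e : ℕ) :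
    IsRational (mk fun n : ℕ => (n : R) ^ e) := by
  induction e with
  | zero =>
    have h : (mk fun n : ℕ => (n : R) ^ 0) = mk 1 := by ext; simp
    refine ⟨1, 1 - Polynomial.X, by simp, ?_⟩
    rw [h, mul_comm]
    simpa using mk_one_mul_one_sub_eq_one R
  | succ e ih =>
    have h : (mk fun n : ℕ => (n : R) ^ (e + 1)) = X * d⁄dX R (mk fun n : ℕ => (n : R) ^ e) := by
      ext n
      rw [coeff_X_mul_derivative, coeff_mk, coeff_mk, pow_succ, mul_comm]
    rw [h, ← Polynomial.coe_X]
    exact (isRational_coe Polynomial.X).mul ih.derivative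

section WeightedSeries

variable {ι R : Type*} [Fintype ι] [CommSemiring R]

theorem finite_setOf_sum_mul_eq {w : ι → ℕ} (hw : ∀ i, w i ≠ 0) (m : ℕ) :
    {d : ι → ℕ | ∑ i, w i * d i = m}.Finite := by
  refine (Set.Finite.pi' fun _ => Set.finite_Iic m).subset fun d hd i => ?_
  rw [Set.mem_Iic]
  calc d i ≤ w i * d i := Nat.le_mul_of_pos_left _ (Nat.pos_of_ne_zero (hw i))
    _ ≤ ∑ j, w j * d j :=
      single_le_sum (f := fun j => w j * d j) (fun j _ => Nat.zero_le _) (mem_univ i)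
    _ = m := hd

noncomputable def weightedSeries (w : ι → ℕ) (f : (ι → ℕ) → R) : R⟦X⟧ :=
  mk fun m => ∑ᶠ d ∈ {d : ι → ℕ | ∑ i, w i * d i = m}, f d

variable {w : ι → ℕ}

theorem weightedSeries_sum {κ : Type*} (s : Finset κ) (hw : ∀ i, w i ≠ 0)
    (f : κ → (ι → ℕ) → R) :
    weightedSeries w (fun d => ∑ k ∈ s, f k d) = ∑ k ∈ s, weightedSeries w (f k) := by
  ext m
  simp only [weightedSeries, coeff_mk, map_sum,
    finsum_mem_eq_finite_toFinset_sum _ (finite_setOf_sum_mul_eq hw m)]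
  exact sum_comm

theorem weightedSeries_const_mul (hw : ∀ i, w i ≠ 0) (c : R) (f : (ι → ℕ) → R) :
    weightedSeries w (fun d => c * f d) = C c * weightedSeries w f := by
  ext m
  rw [weightedSeries, weightedSeries, coeff_mk, coeff_C_mul, coeff_mk,
    mul_finsum_mem' _ _ (finite_setOf_sum_mul_eq hw m)]

end WeightedSeries

section WeightedSeriesRing

variable {ι R : Type*} [Fintype ι] [CommRing R] {w : ι → ℕ}

theorem weightedSeries_prod (hw : ∀ i, w i ≠ 0) (g : ι → ℕ → R) :
    weightedSeries w (fun d => ∏ i, g i (d i)) = ∏ i, expand (w i) (hw i) (mk (g i)) := by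
  classical
  ext m
  rw [coeff_prod, weightedSeries, coeff_mk]
  simp_rw [coeff_expand, coeff_mk]
  rw [sum_congr rfl fun l _ => prod_ite_zero]
  simp only [mem_univ, true_imp_iff]
  rw [← sum_filter, ← finsum_mem_coe_finset]
  refine finsum_mem_eq_of_bijOn (fun d => Finsupp.equivFunOnFinite.symm fun i => w i * d i)
    (Set.InvOn.bijOn (f' := fun l i => l i / w i) ⟨?_, ?_⟩ ?_ ?_) ?_
  · intro d _
    funext i
    exact Nat.mul_div_cancel_left _ (Nat.pos_of_ne_zero (hw i))
  · intro l hl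
    ext i
    exact Nat.mul_div_cancel' ((mem_filter.mp hl).2 i)
  · intro d hd
    simpa [mem_finsuppAntidiag] using hd
  · intro l hl
    obtain ⟨hl, hdvd⟩ := mem_filter.mp hl
    rw [mem_finsuppAntidiag] at hl
    simp only [Set.mem_ofPred_eq, Nat.mul_div_cancel' (hdvd _)]
    exact hl.1
  · intro d _
    simp [Nat.mul_div_cancel_left _ (Nat.pos_of_ne_zero (hw _))]

theorem isRational_weightedSeries_eval [IsDomain R] (hw : ∀ i, w i ≠ 0)
    (Q : MvPolynomial ι R) :
    IsRational (weightedSeries w fun d => MvPolynomial.eval (fun i => (d i : R)) Q) := by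
  simp_rw [MvPolynomial.eval_eq', weightedSeries_sum _ hw, weightedSeries_const_mul hw]
  refine IsRational.sum _ fun e _ => (isRational_C _).mul ?_
  rw [weightedSeries_prod hw fun i n => (n : R) ^ e i]
  exact IsRational.prod _ fun i _ => (isRational_mk_natCast_pow (e i)).expand _ _

end WeightedSeriesRing

end PowerSeries

section SuffixSum

variable {r : ℕ}

def suffixSum (d : Fin r → ℕ) (i : Fin r) : ℕ := ∑ j ∈ Ici i, d j

def nextOrZero (l : Fin r → ℕ) (i : Fin r) : ℕ :=
  if h : (i : ℕ) + 1 < r then l ⟨i + 1, h⟩ else 0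

theorem suffixSum_eq_add_nextOrZero (d : Fin r → ℕ) (i : Fin r) :
    suffixSum d i = d i + nextOrZero (suffixSum d) i := by
  rw [suffixSum, Ici_eq_cons_Ioi, sum_cons, nextOrZero]
  congr 1
  split_ifs with h
  · refine sum_congr ?_ fun _ _ => rfl
    ext j
    simp only [mem_Ioi, mem_Ici, Fin.lt_def, Fin.le_def]
    omega
  · refine sum_eq_zero fun j hj => absurd (mem_Ioi.mp hj) ?_
    rw [Fin.lt_def]
    omega

theorem nextOrZero_le {l : Fin r → ℕ} (hl : Antitone l) (i : Fin r) : nextOrZero l i ≤ l i := by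
  unfold nextOrZero
  split_ifs
  · exact hl (Fin.le_def.mpr (Nat.le_succ _))
  · exact Nat.zero_le _

theorem antitone_suffixSum (d : Fin r → ℕ) : Antitone (suffixSum d) :=
  fun _ _ hij => sum_le_sum_of_subset (Ici_subset_Ici.mpr hij)

theorem sum_suffixSum (d : Fin r → ℕ) :
    ∑ i, suffixSum d i = ∑ j : Fin r, ((j : ℕ) + 1) * d j := by
  simp only [suffixSum]
  rw [sum_comm' (t' := univ) (s' := fun j => Iic j) (fun i j => by simp)]
  simp [Fin.card_Iic]

theorem suffixSum_injective : Function.Injective (suffixSum (r := r)) := by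
  intro d d' h
  funext i
  have := suffixSum_eq_add_nextOrZero d i
  rw [h, suffixSum_eq_add_nextOrZero d' i] at this
  omega

theorem suffixSum_sub_nextOrZero {l : Fin r → ℕ} (hl : Antitone l) :
    suffixSum (fun i => l i - nextOrZero l i) = l := by
  funext i
  induction hk : r - (i : ℕ) generalizing i with
  | zero => exact absurd hk (Nat.sub_ne_zero_of_lt i.isLt)
  | succ k ih =>
    have hnext : nextOrZero (suffixSum fun i => l i - nextOrZero l i) i = nextOrZero l i := by
      unfold nextOrZero
      split_ifs
      · exact ih _ (by simp only; omega)
      · rfl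
    rw [suffixSum_eq_add_nextOrZero, hnext]
    exact Nat.sub_add_cancel (nextOrZero_le hl i)

theorem bijOn_suffixSum (m : ℕ) :
    Set.BijOn (suffixSum (r := r)) {d | ∑ j : Fin r, ((j : ℕ) + 1) * d j = m}
      {l | Antitone l ∧ ∑ i, l i = m} := by
  refine ⟨fun d hd => ⟨antitone_suffixSum d, (sum_suffixSum d).trans hd⟩,
    suffixSum_injective.injOn, fun l ⟨hl, hsum⟩ => ⟨_, ?_, suffixSum_sub_nextOrZero hl⟩⟩
  rw [Set.mem_ofPred_eq, ← sum_suffixSum, suffixSum_sub_nextOrZero hl, hsum]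

theorem mk_finsum_antitone_eq_weightedSeries {R : Type*} [CommSemiring R]
    (f : (Fin r → ℕ) → R) :
    PowerSeries.mk (fun m => ∑ᶠ l ∈ {l : Fin r → ℕ | Antitone l ∧ ∑ i, l i = m}, f l) =
      PowerSeries.weightedSeries (fun j : Fin r => (j : ℕ) + 1) (fun d => f (suffixSum d)) := by
  ext m
  rw [PowerSeries.weightedSeries, PowerSeries.coeff_mk, PowerSeries.coeff_mk]
  exact (finsum_mem_eq_of_bijOn _ (bijOn_suffixSum m) fun _ _ => rfl).symm

end SuffixSum

theorem partition_polynomial_sum_rational_general {r : ℕ}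
    (P : MvPolynomial (Fin r) ℚ) :
    ∃ A B : Polynomial ℚ, B.coeff 0 ≠ 0 ∧
      (B : PowerSeries ℚ) *
          PowerSeries.mk (fun m =>
            ∑ᶠ lam ∈ {lam : Fin r → ℕ | Antitone lam ∧ (∑ i, lam i) = m},
              MvPolynomial.eval (fun i => (lam i : ℚ)) P) =
        (A : PowerSeries ℚ) := by
  have hP : (fun d => MvPolynomial.eval (fun i => (d i : ℚ))
      (MvPolynomial.bind₁ (fun i => ∑ j ∈ Ici i, MvPolynomial.X j) P)) =
      fun d => MvPolynomial.eval (fun i => (suffixSum d i : ℚ)) P := by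
    funext d
    rw [MvPolynomial.eval, MvPolynomial.eval₂Hom_bind₁]
    simp [suffixSum]
  rw [mk_finsum_antitone_eq_weightedSeries, ← hP]
  exact PowerSeries.isRational_weightedSeries_eval (fun _ => Nat.succ_ne_zero _) _

/-- Summing a fixed polynomial function of the parts over all partitions (weakly decreasing
tuples) of `m` into at most `r` parts produces a rational generating series in `q`. -/
theorem partition_polynomial_sum_rational {r : ℕ} (hr : 1 ≤ r)
    (P : MvPolynomial (Fin r) ℚ) :
    ∃ A B : Polynomial ℚ, B.coeff 0 ≠ 0 ∧
      (B : PowerSeries ℚ) *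
          PowerSeries.mk (fun m =>
            ∑ᶠ lam ∈ {lam : Fin r → ℕ | Antitone lam ∧ (∑ i, lam i) = m},
              MvPolynomial.eval (fun i => (lam i : ℚ)) P) =
        (A : PowerSeries ℚ) :=
  partition_polynomial_sum_rational_general P
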